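/- Let s, t be real numbers with −1 < s < t < 1. Then the point 2·(s,s²,s³) + (t,t²,t³) + (−1,1,−1) does not lie on the topological boundary of 𝒜_{3,4}. -/

import Mathlib

/-!
Write `m(x) = (x, x², x³)`, so that the point is `m(s) + m(s) + m(t) + m(-1)`, the sum over the
roots of `q(x) = (x - s)²(x - t)(x + 1)`. The first three power sums of the roots of a monic
quartic are determined by its first three elementary symmetric functions, so they do not change
when `q` is replaced by `q + δ`. For small `δ > 0` the double root `s` splits and `q + δ` has four
distinct roots `r₀ < r₁ < r₂ < r₃` in `(-1, 1)`, hence the point also equals `∑ m(rᵢ)`. Since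
`m'(r₀), m'(r₁), m'(r₂)` are linearly independent (a Vandermonde determinant), the inverse
function theorem shows that moving `r₀, r₁, r₂` sweeps out a neighbourhood of the point inside
`𝒜_{3,4}`.
-/

/-- The Minkowski sum of `n` copies of the twisted cubic segment
`{(t, t^2, t^3) : -1 <= t <= 1}`. -/
def A3 (n : ℕ) : Set (ℝ × ℝ × ℝ) :=
  {p | ∃ t : Fin n → ℝ, (∀ i, -1 ≤ t i ∧ t i ≤ 1) ∧
       p = (∑ i, t i, ∑ i, (t i) ^ 2, ∑ i, (t i) ^ 3)}

open Set Function Filter Topology ContinuousLinearMap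
open scoped Pointwise

def momentCurve (x : ℝ) : ℝ × ℝ × ℝ := (x, x ^ 2, x ^ 3)

open Polynomial in
lemma cubic_coeffs_eq_zero_of_roots {R ι : Type*} [CommRing R] [IsDomain R] [Fintype ι]
    {x : ι → R} (hx : Injective x) (hcard : 3 < Fintype.card ι) {c₃ c₂ c₁ c₀ : R}
    (hroot : ∀ i, c₃ * x i ^ 3 + c₂ * x i ^ 2 + c₁ * x i + c₀ = 0) :
    c₃ = 0 ∧ c₂ = 0 ∧ c₁ = 0 ∧ c₀ = 0 := by
  have hP : C c₃ * X ^ 3 + C c₂ * X ^ 2 + C c₁ * X + C c₀ = 0 :=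
    eq_zero_of_natDegree_lt_card_of_eval_eq_zero _ hx (fun i ↦ by simpa using hroot i)
      (natDegree_cubic_le.trans_lt hcard)
  refine ⟨?_, ?_, ?_, ?_⟩
  · simpa using congrArg (coeff · 3) hP
  · simpa using congrArg (coeff · 2) hP
  · simpa using congrArg (coeff · 1) hP
  · simpa using congrArg (coeff · 0) hP

lemma sum_momentCurve_eq_of_prod_sub_eq {r a : Fin 4 → ℝ} (hr : Injective r) {e : ℝ}
    (hroot : ∀ i, ∏ j, (r i - a j) = e) :
    ∑ i, momentCurve (r i) = ∑ j, momentCurve (a j) := by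
  have hvanish : ∀ i, ∏ j, (r i - r j) = 0 := fun i ↦
    Finset.prod_eq_zero (Finset.mem_univ i) (sub_self _)
  simp only [Fin.prod_univ_four] at hroot hvanish
  -- `∏ (x - a j) - e - ∏ (x - r j)` is a cubic vanishing at the four `r i`.
  obtain ⟨h₁, h₂, h₃, -⟩ := cubic_coeffs_eq_zero_of_roots hr (by simp)
    (c₃ := r 0 + r 1 + r 2 + r 3 - (a 0 + a 1 + a 2 + a 3))
    (c₂ := a 0 * a 1 + a 0 * a 2 + a 0 * a 3 + a 1 * a 2 + a 1 * a 3 + a 2 * a 3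
      - (r 0 * r 1 + r 0 * r 2 + r 0 * r 3 + r 1 * r 2 + r 1 * r 3 + r 2 * r 3))
    (c₁ := r 0 * r 1 * r 2 + r 0 * r 1 * r 3 + r 0 * r 2 * r 3 + r 1 * r 2 * r 3
      - (a 0 * a 1 * a 2 + a 0 * a 1 * a 3 + a 0 * a 2 * a 3 + a 1 * a 2 * a 3))
    (c₀ := a 0 * a 1 * a 2 * a 3 - e - r 0 * r 1 * r 2 * r 3)
    (fun i ↦ by linear_combination hroot i - hvanish i)
  simp only [Fin.sum_univ_four, momentCurve, Prod.mk_add_mk, Prod.mk.injEq]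
  -- Newton's identities
  exact ⟨by linear_combination h₁, by grind, by grind⟩

lemma exists_mem_Ioo_eq_zero_of_mul_neg {f : ℝ → ℝ} (hf : Continuous f) {u v : ℝ}
    (huv : u ≤ v) (h : f u * f v < 0) : ∃ x ∈ Ioo u v, f x = 0 := by
  rcases mul_neg_iff.1 h with ⟨hu, hv⟩ | ⟨hu, hv⟩
  · exact intermediate_value_Ioo' huv hf.continuousOn ⟨hv, hu⟩
  · exact intermediate_value_Ioo huv hf.continuousOn ⟨hu, hv⟩

lemma exists_injective_prod_sub_eq_of_double_root {a s t : ℝ} (has : a < s) (hst : s < t) :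
    ∃ e : ℝ, ∃ r : Fin 4 → ℝ, Injective r ∧ (∀ i, r i ∈ Ioo a t) ∧
      ∀ i, ∏ j, (r i - ![s, s, t, a] j) = e := by
  set q : ℝ → ℝ := fun x ↦ (x - s) * (x - s) * (x - t) * (x - a)
  have hneg : ∀ x ∈ Ioo a t, x ≠ s → q x < 0 := fun x hx hxs ↦
    mul_neg_of_neg_of_pos (mul_neg_of_pos_of_neg (mul_self_pos.2 (sub_ne_zero.2 hxs))
      (by linarith [hx.2])) (by linarith [hx.1])
  obtain ⟨x₀, hax₀, hx₀s⟩ := exists_between has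
  obtain ⟨x₁, hsx₁, hx₁t⟩ := exists_between hst
  have hx₀ : q x₀ < 0 := hneg x₀ ⟨hax₀, by linarith⟩ hx₀s.ne
  have hx₁ : q x₁ < 0 := hneg x₁ ⟨by linarith, hx₁t⟩ hsx₁.ne'
  obtain ⟨δ, hδ, hδ₀, hδ₁⟩ : ∃ δ > 0, q x₀ + δ < 0 ∧ q x₁ + δ < 0 :=
    ⟨min (-q x₀) (-q x₁) / 2, half_pos (lt_min (neg_pos.2 hx₀) (neg_pos.2 hx₁)),
      by linarith [min_le_left (-q x₀) (-q x₁)], by linarith [min_le_right (-q x₀) (-q x₁)]⟩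
  have hroot : ∀ {u v : ℝ}, u < v → (q u + δ) * (q v + δ) < 0 → ∃ x ∈ Ioo u v, q x + δ = 0 :=
    fun huv h ↦ exists_mem_Ioo_eq_zero_of_mul_neg (by fun_prop) huv.le h
  have hqa : 0 < q a + δ := by simpa [q] using hδ
  have hqs : 0 < q s + δ := by simpa [q] using hδ
  have hqt : 0 < q t + δ := by simpa [q] using hδ
  obtain ⟨r₀, hr₀, h₀⟩ := hroot hax₀ (mul_neg_of_pos_of_neg hqa hδ₀)
  obtain ⟨r₁, hr₁, h₁⟩ := hroot hx₀s (mul_neg_of_neg_of_pos hδ₀ hqs)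
  obtain ⟨r₂, hr₂, h₂⟩ := hroot hsx₁ (mul_neg_of_pos_of_neg hqs hδ₁)
  obtain ⟨r₃, hr₃, h₃⟩ := hroot hx₁t (mul_neg_of_neg_of_pos hδ₁ hqt)
  refine ⟨-δ, ![r₀, r₁, r₂, r₃], StrictMono.injective ?_, fun i ↦ ?_, fun i ↦ ?_⟩
  · refine Fin.strictMono_iff_lt_succ.2 fun i ↦ ?_
    fin_cases i <;> simp <;> linarith [hr₀.2, hr₁.1, hr₁.2, hr₂.1, hr₂.2, hr₃.1]
  · fin_cases i <;> simp <;> constructor <;>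
      linarith [hr₀.1, hr₀.2, hr₁.1, hr₁.2, hr₂.1, hr₂.2, hr₃.1, hr₃.2]
  · fin_cases i <;> simp [Fin.prod_univ_four] <;> linarith

lemma sum_momentCurve_mem_A3 {n : ℕ} {t : Fin n → ℝ} (ht : ∀ i, t i ∈ Icc (-1) 1) :
    ∑ i, momentCurve (t i) ∈ A3 n :=
  ⟨t, ht, by ext <;> simp [momentCurve, Prod.fst_sum, Prod.snd_sum]⟩

lemma A3_add_subset (m n : ℕ) : A3 m + A3 n ⊆ A3 (m + n) := by
  rintro _ ⟨_, ⟨t, ht, rfl⟩, _, ⟨u, hu, rfl⟩, rfl⟩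
  refine ⟨Fin.append t u, fun i ↦ Fin.addCases (by simpa using ht) (by simpa using hu) i, ?_⟩
  simp [Fin.sum_univ_add]

lemma hasStrictDerivAt_momentCurve (x : ℝ) :
    HasStrictDerivAt momentCurve (1, 2 * x, 3 * x ^ 2) x := by
  unfold momentCurve
  simpa using (hasStrictDerivAt_id x).prodMk
    ((hasStrictDerivAt_pow 2 x).prodMk (hasStrictDerivAt_pow 3 x))

lemma linearIndependent_momentCurve_deriv {a b c : ℝ} (hab : a ≠ b) (hac : a ≠ c)
    (hbc : b ≠ c) :
    LinearIndependent ℝ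
      ![((1 : ℝ), 2 * a, 3 * a ^ 2), (1, 2 * b, 3 * b ^ 2), (1, 2 * c, 3 * c ^ 2)] := by
  refine Fintype.linearIndependent_iff.2 fun g hg ↦ ?_
  simp only [Fin.sum_univ_three, Matrix.cons_val, Prod.smul_mk, smul_eq_mul, Prod.mk_add_mk,
    Prod.mk_eq_zero] at hg
  obtain ⟨e₁, e₂, e₃⟩ := hg
  have h₀ : (a - b) * (a - c) * g 0 = 0 := by
    linear_combination (b * c) * e₁ - ((b + c) / 2) * e₂ + (1 / 3) * e₃
  have h₁ : (a - b) * (b - c) * g 1 = 0 := by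
    linear_combination -(a * c) * e₁ + ((a + c) / 2) * e₂ - (1 / 3) * e₃
  have hg₀ : g 0 = 0 := by simpa [sub_eq_zero, hab, hac] using h₀
  have hg₁ : g 1 = 0 := by simpa [sub_eq_zero, hab, hbc] using h₁
  have hg₂ : g 2 = 0 := by linear_combination e₁ - hg₀ - hg₁
  intro i
  fin_cases i
  exacts [hg₀, hg₁, hg₂]

lemma HasStrictFDerivAt.image_mem_nhds {𝕜 E F : Type*} [NontriviallyNormedField 𝕜]
    [NormedAddCommGroup E] [NormedSpace 𝕜 E] [CompleteSpace E]
    [NormedAddCommGroup F] [NormedSpace 𝕜 F] [CompleteSpace F]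
    {f : E → F} {f' : E →L[𝕜] F} {x : E} (hf : HasStrictFDerivAt f f' x)
    (hsurj : f'.range = ⊤) {s : Set E} (hs : s ∈ 𝓝 x) : f '' s ∈ 𝓝 (f x) :=
  hf.map_nhds_eq_of_surj hsurj ▸ image_mem_map hs

lemma momentCurve_add_add_add_mem_interior_A3 {a b c : ℝ} (ha : a ∈ Ioo (-1) 1)
    (hb : b ∈ Ioo (-1) 1) (hc : c ∈ Ioo (-1) 1) (hab : a ≠ b) (hac : a ≠ c) (hbc : b ≠ c)
    {n : ℕ} {x : ℝ × ℝ × ℝ} (hx : x ∈ A3 n) :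
    momentCurve a + momentCurve b + momentCurve c + x ∈ interior (A3 (3 + n)) := by
  set F : ℝ × ℝ × ℝ → ℝ × ℝ × ℝ :=
    fun p ↦ momentCurve p.1 + momentCurve p.2.1 + momentCurve p.2.2 + x
  have hF := ((((hasStrictDerivAt_momentCurve a).hasStrictFDerivAt.comp (a, b, c)
    hasStrictFDerivAt_fst).add ((hasStrictDerivAt_momentCurve b).hasStrictFDerivAt.comp (a, b, c)
    (hasStrictFDerivAt_snd (𝕜 := ℝ)).fst)).add
    ((hasStrictDerivAt_momentCurve c).hasStrictFDerivAt.comp (a, b, c)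
    (hasStrictFDerivAt_snd (𝕜 := ℝ)).snd)).add_const x
  have himage : F '' (Ioo (-1) 1 ×ˢ Ioo (-1) 1 ×ˢ Ioo (-1) 1) ⊆ A3 (3 + n) := by
    rintro _ ⟨p, ⟨hp₁, hp₂, hp₃⟩, rfl⟩
    refine A3_add_subset 3 n (add_mem_add ?_ hx)
    simpa [Fin.sum_univ_three] using sum_momentCurve_mem_A3 (t := ![p.1, p.2.1, p.2.2])
      fun i ↦ Ioo_subset_Icc_self (by fin_cases i <;> assumption)
  refine interior_mono himage (mem_interior_iff_mem_nhds.2 (hF.image_mem_nhds ?_ ?_))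
  · refine LinearMap.range_eq_top.2 (LinearMap.injective_iff_surjective.1 ?_)
    refine (injective_iff_map_eq_zero _).2 fun v hv ↦ ?_
    have hv₀ := Fintype.linearIndependent_iff.1 (linearIndependent_momentCurve_deriv hab hac hbc)
      ![v.1, v.2.1, v.2.2] (by simpa [Fin.sum_univ_three] using hv)
    ext
    exacts [hv₀ 0, hv₀ 1, hv₀ 2]
  · exact prod_mem_nhds (Ioo_mem_nhds ha.1 ha.2)
      (prod_mem_nhds (Ioo_mem_nhds hb.1 hb.2) (Ioo_mem_nhds hc.1 hc.2))

theorem two_one_minusone_not_boundary (s t : ℝ) (hs : -1 < s) (hst : s < t) (ht : t < 1) :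
    (2 * s + t + -1, 2 * s ^ 2 + t ^ 2 + 1, 2 * s ^ 3 + t ^ 3 + -1) ∉ frontier (A3 4) := by
  obtain ⟨e, r, hr, hrt, hroot⟩ := exists_injective_prod_sub_eq_of_double_root hs hst
  have hr_mem : ∀ i, r i ∈ Ioo (-1) 1 := fun i ↦ ⟨(hrt i).1, (hrt i).2.trans ht⟩
  have hpoint : (2 * s + t + -1, 2 * s ^ 2 + t ^ 2 + 1, 2 * s ^ 3 + t ^ 3 + -1) =
      momentCurve (r 0) + momentCurve (r 1) + momentCurve (r 2) + momentCurve (r 3) := by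
    rw [← Fin.sum_univ_four (f := fun i ↦ momentCurve (r i)),
      sum_momentCurve_eq_of_prod_sub_eq hr hroot]
    simp only [Fin.sum_univ_four, momentCurve, Matrix.cons_val, Prod.mk_add_mk, Prod.mk.injEq]
    exact ⟨by ring, by ring, by ring⟩
  have hr₃ : momentCurve (r 3) ∈ A3 1 := by
    simpa using sum_momentCurve_mem_A3 (t := ![r 3])
      (Fin.forall_fin_one.2 (Ioo_subset_Icc_self (hr_mem 3)))
  rw [hpoint]
  exact disjoint_left.1 disjoint_interior_frontier <|
    momentCurve_add_add_add_mem_interior_A3 (hr_mem 0) (hr_mem 1) (hr_mem 2)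
      (hr.ne (by decide)) (hr.ne (by decide)) (hr.ne (by decide)) hr₃
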